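/- arXiv:math/0112257 — 2 statements merged into one kernel-verified Lean document; each statement's English description precedes it below -/
import Mathlib

section
/- Let 1 = a_1 < ... < a_k, h_0 = Σ_{i=1}^{k-1} ⌊a_{i+1}/a_i⌋, and h_1 = h_0 + ⌈(h_0+1)·a_{k-1}/(a_k - a_{k-1})⌉. Then for all h ≥ h_1, N_h(a_1,...,a_k) > (h+1)·a_{k-1} - a_k. -/
open Finset

/-- `n` is representable with weight at most `h` in basis `a 1, ..., a k`. -/
def IsRep (k : ℕ) (a : ℕ → ℕ) (h n : ℕ) : Prop :=
  ∃ x : ℕ → ℕ, ∑ i ∈ Finset.Icc 1 k, x i * a i = n ∧ ∑ i ∈ Finset.Icc 1 k, x i ≤ h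

/-- `postN k a h` is `N_h(a_1,...,a_k)`: the least positive integer not `h`-representable. -/
noncomputable def postN (k : ℕ) (a : ℕ → ℕ) (h : ℕ) : ℕ := sInf {n : ℕ | 0 < n ∧ ¬ IsRep k a h n}

/-- `h_0 = ∑_{i=1}^{k-1} ⌊a_{i+1}/a_i⌋`. -/
def selmerH0 (k : ℕ) (a : ℕ → ℕ) : ℕ := ∑ i ∈ Finset.Icc 1 (k-1), a (i+1) / a i

/-- `h_1 = h_0 + ⌈(h_0+1)·a_{k-1}/(a_k - a_{k-1})⌉`. -/
def selmerH1 (k : ℕ) (a : ℕ → ℕ) : ℕ :=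
  selmerH0 k a +
    ((selmerH0 k a + 1) * a (k-1) + (a k - a (k-1)) - 1) / (a k - a (k-1))

/-- The Frobenius number (as an integer) of the basis `b 1, ..., b k`:
the largest integer not a nonnegative integer combination of the `b i`. -/
noncomputable def FrobZ (k : ℕ) (b : ℕ → ℕ) : ℤ :=
  sSup {n : ℤ | ¬ ∃ x : ℕ → ℕ, ((∑ i ∈ Finset.Icc 1 k, x i * b i : ℕ) : ℤ) = n}

/-- The Frobenius number (as an integer) of the complementary basis
`a_k - a_{k-1}, ..., a_k - a_1, a_k`. -/
noncomputable def FrobCompZ (k : ℕ) (a : ℕ → ℕ) : ℤ :=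
  sSup {n : ℤ | ¬ ∃ y : ℕ → ℕ,
    ((∑ i ∈ Finset.Icc 1 (k-1), y i * (a k - a i) + y k * a k : ℕ) : ℤ) = n}

/-- Monotonicity of `a` on `[1,k]`. -/
lemma amono (k : ℕ) (a : ℕ → ℕ)
    (hmono : ∀ i, 1 ≤ i → i < k → a i < a (i + 1)) :
    ∀ i j, 1 ≤ i → i ≤ j → j ≤ k → a i ≤ a j := by
  intro i j hi hij hjk
  induction j with
  | zero => omega
  | succ m ih =>
    rcases Nat.lt_or_ge i (m+1) with hlt | hge
    · have h1 : a i ≤ a m := ih (by omega) (by omega)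
      have h2 : a m < a (m+1) := hmono m (by omega) (by omega)
      omega
    · have he : i = m + 1 := by omega
      rw [he]

lemma apos (k : ℕ) (a : ℕ → ℕ) (ha1 : a 1 = 1)
    (hmono : ∀ i, 1 ≤ i → i < k → a i < a (i + 1)) :
    ∀ i, 1 ≤ i → i ≤ k → 0 < a i := by
  intro i hi hik
  have := amono k a hmono 1 i (le_refl 1) hi hik
  omega

/-- Greedy representation: every `m < a (i+1)` is representable using `a 1 .. a i`
with weight at most `∑_{j=1}^{i} ⌊a_{j+1}/a_j⌋`. -/
lemma greedy (k : ℕ) (a : ℕ → ℕ) (ha1 : a 1 = 1)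
    (hmono : ∀ i, 1 ≤ i → i < k → a i < a (i + 1)) :
    ∀ i, 1 ≤ i → i ≤ k - 1 → ∀ m, m < a (i+1) →
      ∃ x : ℕ → ℕ, (∀ j, j < 1 ∨ i < j → x j = 0) ∧
        ∑ j ∈ Icc 1 i, x j * a j = m ∧
        ∑ j ∈ Icc 1 i, x j ≤ ∑ j ∈ Icc 1 i, a (j+1) / a j := by
  intro i
  induction i with
  | zero => intro h; omega
  | succ n ih =>
    intro _ hik m hm
    rcases Nat.eq_zero_or_pos n with hn | hn
    · subst hn
      refine ⟨Function.update (fun _ => 0) 1 m, ?_, ?_, ?_⟩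
      · intro j hj
        rw [Function.update_of_ne (by omega : j ≠ 1)]
      · rw [Finset.Icc_self, Finset.sum_singleton, Function.update_self, ha1,
          Nat.mul_one]
      · rw [Finset.Icc_self, Finset.sum_singleton, Finset.sum_singleton,
          Function.update_self, ha1, Nat.div_one]
        exact Nat.le_of_lt hm
    · -- n ≥ 1, i = n+1
      have hpos : 0 < a (n+1) := apos k a ha1 hmono (n+1) (by omega) (by omega)
      obtain ⟨q, r, hqr, hrlt, hqle⟩ :
          ∃ q r, q * a (n+1) + r = m ∧ r < a (n+1) ∧ q ≤ a (n+1+1) / a (n+1) :=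
        ⟨m / a (n+1), m % a (n+1),
          Nat.div_add_mod' m (a (n+1)), Nat.mod_lt _ hpos,
          Nat.div_le_div_right (le_of_lt hm)⟩
      obtain ⟨x, hx0, hxsum, hxw⟩ := ih (by omega) (by omega) r hrlt
      refine ⟨Function.update x (n+1) q, ?_, ?_, ?_⟩
      · intro j hj
        rw [Function.update_of_ne (by omega : j ≠ n+1)]
        exact hx0 j (by omega)
      · rw [Finset.sum_Icc_succ_top (by omega : 1 ≤ n+1)]
        have e1 : ∀ j ∈ Icc 1 n, Function.update x (n+1) q j * a j = x j * a j := by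
          intro j hj
          simp only [mem_Icc] at hj
          rw [Function.update_of_ne (by omega : j ≠ n+1)]
        rw [Finset.sum_congr rfl e1, hxsum, Function.update_self]
        omega
      · rw [Finset.sum_Icc_succ_top (by omega : 1 ≤ n+1),
            Finset.sum_Icc_succ_top (by omega : 1 ≤ n+1)]
        have e1 : ∀ j ∈ Icc 1 n, Function.update x (n+1) q j = x j := by
          intro j hj
          simp only [mem_Icc] at hj
          rw [Function.update_of_ne (by omega : j ≠ n+1)]
        rw [Finset.sum_congr rfl e1, Function.update_self]
        have hb : (Icc 1 n).sum x = ∑ j ∈ Icc 1 n, x j := rfl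
        omega

theorem stmt4 (k : ℕ) (a : ℕ → ℕ) (hk : 2 ≤ k) (ha1 : a 1 = 1)
    (hmono : ∀ i, 1 ≤ i → i < k → a i < a (i + 1)) (h : ℕ) (hh : selmerH1 k a ≤ h) :
    ((h + 1) * a (k - 1) : ℤ) - a k < (postN k a h : ℤ) := by
  have hak1lt : a (k-1) < a k := by
    have h1 := hmono (k-1) (by omega) (by omega)
    have h2 : k - 1 + 1 = k := by omega
    rw [h2] at h1
    exact h1
  have hakpos : 0 < a k := apos k a ha1 hmono k (by omega) le_rfl
  have hak1pos : 0 < a (k-1) := apos k a ha1 hmono (k-1) (by omega) (by omega)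
  -- the defining set of postN is nonempty
  have hne : {n : ℕ | 0 < n ∧ ¬ IsRep k a h n}.Nonempty := by
    refine ⟨h * a k + 1, by omega, ?_⟩
    rintro ⟨x, hsum, hw⟩
    have hle : ∑ i ∈ Icc 1 k, x i * a i ≤ ∑ i ∈ Icc 1 k, x i * a k := by
      apply Finset.sum_le_sum
      intro i hi
      simp only [mem_Icc] at hi
      exact Nat.mul_le_mul_left _ (amono k a hmono i k hi.1 hi.2 le_rfl)
    rw [← Finset.sum_mul] at hle
    have hle2 : (∑ i ∈ Icc 1 k, x i) * a k ≤ h * a k := Nat.mul_le_mul_right _ hw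
    omega
  have hmem := Nat.sInf_mem hne
  obtain ⟨hpos, hnrep⟩ := hmem
  rw [← postN] at hpos hnrep
  set h0 := selmerH0 k a with hh0
  have hd : 0 < a k - a (k-1) := by omega
  have hh0le : h0 ≤ h := by
    have : h0 ≤ selmerH1 k a := Nat.le_add_right _ _
    omega
  -- key arithmetic consequence of hh : (h+1) * a_{k-1} ≤ (h - h0) * a_k
  have key : (h + 1) * a (k-1) ≤ (h - h0) * a k := by
    obtain ⟨c, hc1, hc2⟩ :
        ∃ c, (h0 + 1) * a (k-1) ≤ (a k - a (k-1)) * c ∧ h0 + c ≤ h := by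
      refine ⟨((h0 + 1) * a (k-1) + (a k - a (k-1)) - 1) / (a k - a (k-1)), ?_, ?_⟩
      · have h1 := Nat.div_add_mod ((h0 + 1) * a (k-1) + (a k - a (k-1)) - 1)
          (a k - a (k-1))
        have h2 : ((h0 + 1) * a (k-1) + (a k - a (k-1)) - 1) % (a k - a (k-1))
            < a k - a (k-1) := Nat.mod_lt _ hd
        omega
      · have hs1 : selmerH1 k a
            = h0 + ((h0 + 1) * a (k-1) + (a k - a (k-1)) - 1) / (a k - a (k-1)) := rfl
        omega
    have hcH : c ≤ h - h0 := by omega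
    have hsum : a (k-1) + (a k - a (k-1)) = a k := by omega
    calc (h + 1) * a (k-1)
        = (h - h0) * a (k-1) + (h0 + 1) * a (k-1) := by
          rw [← Nat.add_mul]; congr 1; omega
      _ ≤ (h - h0) * a (k-1) + (a k - a (k-1)) * (h - h0) := by
          exact Nat.add_le_add_left (le_trans hc1 (Nat.mul_le_mul le_rfl hcH)) _
      _ = (h - h0) * a k := by
          rw [Nat.mul_comm (a k - a (k-1)), ← Nat.mul_add, hsum]
  -- every n in (0, (h+1)a_{k-1} - a_k] is representable
  have hrep : ∀ n : ℕ, 0 < n → n + a k ≤ (h + 1) * a (k-1) → IsRep k a h n := by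
    intro n hn hnle
    have hH1 : 1 ≤ h - h0 := by
      by_contra hcon
      have h0eq : h - h0 = 0 := by omega
      rw [h0eq, Nat.zero_mul] at key
      omega
    obtain ⟨H', hH'⟩ : ∃ H', h - h0 = H' + 1 := ⟨h - h0 - 1, by omega⟩
    rw [hH'] at key
    have hsucc : (H' + 1) * a k = H' * a k + a k := by rw [Nat.succ_mul]
    have hn2 : n ≤ H' * a k := by omega
    have hXle : n / a k ≤ H' := by
      calc n / a k ≤ H' * a k / a k := Nat.div_le_div_right hn2
        _ = H' := Nat.mul_div_cancel _ hakpos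
    have hmlt : n % a k < a k := Nat.mod_lt _ hakpos
    have hkk : (k - 1) + 1 = k := by omega
    obtain ⟨x, hx0, hxsum, hxw⟩ := greedy k a ha1 hmono (k-1) (by omega) le_rfl
      (n % a k) (by rw [hkk]; exact hmlt)
    have hsplit : Icc 1 k = Icc 1 (k-1) ∪ {k} := by
      ext j; simp only [mem_union, mem_Icc, mem_singleton]; omega
    have hdisj : Disjoint (Icc 1 (k-1)) ({k} : Finset ℕ) := by
      simp only [Finset.disjoint_singleton_right, mem_Icc]; omega
    refine ⟨Function.update x k (n / a k), ?_, ?_⟩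
    · rw [hsplit, Finset.sum_union hdisj]
      have e1 : ∀ j ∈ Icc 1 (k-1),
          Function.update x k (n / a k) j * a j = x j * a j := by
        intro j hj; simp only [mem_Icc] at hj
        rw [Function.update_of_ne (by omega : j ≠ k)]
      rw [Finset.sum_congr rfl e1, hxsum, Finset.sum_singleton,
        Function.update_self]
      exact Nat.mod_add_div' n (a k)
    · rw [hsplit, Finset.sum_union hdisj]
      have e1 : ∀ j ∈ Icc 1 (k-1), Function.update x k (n / a k) j = x j := by
        intro j hj; simp only [mem_Icc] at hj
        rw [Function.update_of_ne (by omega : j ≠ k)]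
      rw [Finset.sum_congr rfl e1, Finset.sum_singleton, Function.update_self]
      have hw0 : ∑ j ∈ Icc 1 (k-1), x j ≤ h0 := hxw
      have hb : (Icc 1 (k-1)).sum x = ∑ j ∈ Icc 1 (k-1), x j := rfl
      omega
  -- conclude
  by_contra hcon
  push_neg at hcon
  have hle : (postN k a h : ℤ) + a k ≤ (h + 1) * a (k-1) := by omega
  have hnat : postN k a h + a k ≤ (h + 1) * a (k-1) := by exact_mod_cast hle
  exact hnrep (hrep _ hpos hnat)
end

section
/- Let 1 = a_1 < ... < a_k with k ≥ 2, and let h_1 be as in Selmer's lemma. Then for all h ≥ h_1, N_h(a_1,...,a_k) = h·a_k − g(a_k − a_{k-1}, a_k − a_{k-2}, ..., a_k − a_1, a_k), where g denotes the Frobenius number of the given set. -/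
open Finset

section Aux


variable (k : ℕ) (a : ℕ → ℕ)

lemma selmer_mono (hmono : ∀ i, 1 ≤ i → i < k → a i < a (i + 1)) :
    ∀ i j, 1 ≤ i → i ≤ j → j ≤ k → a i ≤ a j := by
  intro i j hi hij hjk
  induction j with
  | zero => omega
  | succ m ih =>
    rcases Nat.lt_or_ge i (m + 1) with hlt | hge
    · have h1 : a i ≤ a m := ih (by omega) (by omega)
      have h2 : a m < a (m + 1) := hmono m (by omega) (by omega)
      omega
    · have : i = m + 1 := by omega
      subst this
      exact le_refl _

lemma selmer_greedy (ha1 : a 1 = 1) (hmono : ∀ i, 1 ≤ i → i < k → a i < a (i + 1)) :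
    ∀ j, 1 ≤ j → j ≤ k → ∀ r, r < a j →
      ∃ x : ℕ → ℕ, (∀ i, j ≤ i → x i = 0) ∧
        (∑ i ∈ Icc 1 k, x i * a i = r) ∧
        (∑ i ∈ Icc 1 k, x i ≤ ∑ i ∈ Icc 1 (j - 1), a (i + 1) / a i) := by
  intro j
  induction j with
  | zero => omega
  | succ m ih =>
    intro _ hjk r hr
    by_cases hm : m = 0
    · subst hm
      have hr0 : r = 0 := by rw [ha1] at hr; omega
      exact ⟨fun _ => 0, fun _ _ => rfl, by simp [hr0], by simp⟩
    · obtain ⟨p, rfl⟩ : ∃ p, m = p + 1 := ⟨m - 1, by omega⟩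
      have hm1 : 1 ≤ p + 1 := by omega
      have ham : 1 ≤ a (p + 1) := by
        have := selmer_mono k a hmono 1 (p + 1) le_rfl hm1 (by omega)
        omega
      obtain ⟨x', hsupp, hsum, hw⟩ := ih hm1 (by omega) (r % a (p + 1)) (Nat.mod_lt _ (by omega))
      have hmem : p + 1 ∈ Icc 1 k := by rw [mem_Icc]; omega
      set q := r / a (p + 1) with hq
      refine ⟨fun i => x' i + if i = p + 1 then q else 0, ?_, ?_, ?_⟩
      · intro i hi
        have h1 : x' i = 0 := hsupp i (by omega)
        have h2 : i ≠ p + 1 := by omega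
        simp [h1, h2]
      · calc ∑ i ∈ Icc 1 k, (x' i + if i = p + 1 then q else 0) * a i
            = ∑ i ∈ Icc 1 k, (x' i * a i + (if i = p + 1 then q * a i else 0)) := by
              refine Finset.sum_congr rfl fun i _ => ?_
              by_cases h : i = p + 1 <;> simp [h, add_mul]
          _ = (∑ i ∈ Icc 1 k, x' i * a i) + (∑ i ∈ Icc 1 k, if i = p + 1 then q * a i else 0) :=
              Finset.sum_add_distrib
          _ = r % a (p + 1) + q * a (p + 1) := by
              rw [hsum, Finset.sum_ite_eq' (Icc 1 k) (p + 1) (fun i => q * a i), if_pos hmem]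
          _ = r := Nat.mod_add_div' r (a (p + 1))
      · have hsplit : ∑ i ∈ Icc 1 k, (x' i + if i = p + 1 then q else 0)
            = (∑ i ∈ Icc 1 k, x' i) + q := by
          rw [Finset.sum_add_distrib, Finset.sum_ite_eq' (Icc 1 k) (p + 1) (fun _ => q), if_pos hmem]
        rw [hsplit]
        have hq' : q ≤ a (p + 1 + 1) / a (p + 1) := Nat.div_le_div_right (le_of_lt hr)
        have htop : ∑ i ∈ Icc 1 (p + 1 + 1 - 1), a (i + 1) / a i
            = (∑ i ∈ Icc 1 p, a (i + 1) / a i) + a (p + 1 + 1) / a (p + 1) := by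
          simp only [Nat.add_sub_cancel]
          exact Finset.sum_Icc_succ_top (by omega) _
        rw [htop]
        simp only [Nat.add_sub_cancel] at hw
        omega

lemma selmer_rep_of_le (ha1 : a 1 = 1) (hmono : ∀ i, 1 ≤ i → i < k → a i < a (i + 1))
    (hk : 1 ≤ k) (n c : ℕ) (hn : n ≤ c * a k) :
    ∃ x : ℕ → ℕ, (∑ i ∈ Icc 1 k, x i * a i = n) ∧ (∑ i ∈ Icc 1 k, x i ≤ c + selmerH0 k a) := by
  have hak : 1 ≤ a k := by
    have := selmer_mono k a hmono 1 k le_rfl hk le_rfl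
    omega
  obtain ⟨x', hsupp, hsum, hw⟩ :=
    selmer_greedy k a ha1 hmono k hk le_rfl (n % a k) (Nat.mod_lt _ (by omega))
  have hxk : x' k = 0 := hsupp k le_rfl
  have hmem : k ∈ Icc 1 k := by rw [mem_Icc]; omega
  set t := n / a k with ht
  have htc : t ≤ c := by
    have h1 : n / a k ≤ c * a k / a k := Nat.div_le_div_right hn
    rwa [Nat.mul_div_cancel _ (by omega)] at h1
  refine ⟨fun i => x' i + if i = k then t else 0, ?_, ?_⟩
  · calc ∑ i ∈ Icc 1 k, (x' i + if i = k then t else 0) * a i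
        = ∑ i ∈ Icc 1 k, (x' i * a i + (if i = k then t * a i else 0)) := by
          refine Finset.sum_congr rfl fun i _ => ?_
          by_cases h : i = k <;> simp [h, add_mul]
      _ = (∑ i ∈ Icc 1 k, x' i * a i) + (∑ i ∈ Icc 1 k, if i = k then t * a i else 0) :=
          Finset.sum_add_distrib
      _ = n % a k + t * a k := by
          rw [hsum, Finset.sum_ite_eq' (Icc 1 k) k (fun i => t * a i), if_pos hmem]
      _ = n := Nat.mod_add_div' n (a k)
  · have hsplit : ∑ i ∈ Icc 1 k, (x' i + if i = k then t else 0)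
        = (∑ i ∈ Icc 1 k, x' i) + t := by
      rw [Finset.sum_add_distrib, Finset.sum_ite_eq' (Icc 1 k) k (fun _ => t), if_pos hmem]
    rw [hsplit]
    have : (∑ i ∈ Icc 1 k, x' i) ≤ selmerH0 k a := hw
    omega

lemma selmer_comp_cast (hak : ∀ i, 1 ≤ i → i ≤ k → a i ≤ a k) (y : ℕ → ℕ) :
    ((∑ i ∈ Icc 1 (k - 1), y i * (a k - a i) + y k * a k : ℕ) : ℤ)
      = (∑ i ∈ Icc 1 (k - 1), (y i : ℤ)) * (a k : ℤ)
        - (∑ i ∈ Icc 1 (k - 1), (y i : ℤ) * (a i : ℤ)) + (y k : ℤ) * (a k : ℤ) := by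
  push_cast
  have h1 : ∀ i ∈ Icc 1 (k - 1),
      (y i : ℤ) * ((a k - a i : ℕ) : ℤ) = (y i : ℤ) * (a k : ℤ) - (y i : ℤ) * (a i : ℤ) := by
    intro i hi
    rw [mem_Icc] at hi
    rw [Nat.cast_sub (hak i hi.1 (by omega))]
    ring
  rw [Finset.sum_congr rfl h1, Finset.sum_sub_distrib, Finset.sum_mul]

lemma selmer_rep_to_comp (hk : 1 ≤ k) (hak : ∀ i, 1 ≤ i → i ≤ k → a i ≤ a k)
    (x : ℕ → ℕ) (c n : ℕ) (hx : ∑ i ∈ Icc 1 k, x i * a i = n) (hw : ∑ i ∈ Icc 1 k, x i ≤ c) :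
    ∃ y : ℕ → ℕ, ((∑ i ∈ Icc 1 (k - 1), y i * (a k - a i) + y k * a k : ℕ) : ℤ)
      = (c : ℤ) * (a k : ℤ) - (n : ℤ) := by
  obtain ⟨p, rfl⟩ : ∃ p, k = p + 1 := ⟨k - 1, by omega⟩
  set S := ∑ i ∈ Icc 1 (p + 1), x i with hS
  refine ⟨fun i => if i = p + 1 then c - S else x i, ?_⟩
  rw [selmer_comp_cast (p + 1) a hak]
  simp only [Nat.add_sub_cancel]
  have hne : ∀ i ∈ Icc 1 p, (if i = p + 1 then c - S else x i) = x i := by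
    intro i hi
    rw [mem_Icc] at hi
    rw [if_neg (by omega)]
  have e1 : (∑ i ∈ Icc 1 p, ((if i = p + 1 then c - S else x i : ℕ) : ℤ))
      = ∑ i ∈ Icc 1 p, (x i : ℤ) := by
    refine Finset.sum_congr rfl fun i hi => ?_
    rw [hne i hi]
  have e2 : (∑ i ∈ Icc 1 p, ((if i = p + 1 then c - S else x i : ℕ) : ℤ) * (a i : ℤ))
      = ∑ i ∈ Icc 1 p, (x i : ℤ) * (a i : ℤ) := by
    refine Finset.sum_congr rfl fun i hi => ?_
    rw [hne i hi]
  rw [e1, e2]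
  simp only [if_true, ite_true]
  have hxz : (∑ i ∈ Icc 1 p, (x i : ℤ) * (a i : ℤ)) + (x (p + 1) : ℤ) * (a (p + 1) : ℤ)
      = (n : ℤ) := by
    have := Finset.sum_Icc_succ_top (by omega : 1 ≤ p + 1) (fun i => (x i : ℤ) * (a i : ℤ))
    rw [← this]
    exact_mod_cast congrArg (Nat.cast : ℕ → ℤ) hx
  have hSz : (S : ℤ) = (∑ i ∈ Icc 1 p, (x i : ℤ)) + (x (p + 1) : ℤ) := by
    rw [hS]
    push_cast
    exact Finset.sum_Icc_succ_top (by omega : 1 ≤ p + 1) (fun i => (x i : ℤ))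
  have hcS : ((c - S : ℕ) : ℤ) = (c : ℤ) - (S : ℤ) := Nat.cast_sub hw
  rw [hcS]
  linear_combination (-1 : ℤ) * hxz - (a (p+1) : ℤ) * hSz

lemma selmer_comp_weight (hk : 2 ≤ k) (hmono : ∀ i, 1 ≤ i → i < k → a i < a (i + 1))
    (y : ℕ → ℕ) :
    ((∑ i ∈ Icc 1 (k - 1), y i) + y k) * (a k - a (k - 1))
      ≤ ∑ i ∈ Icc 1 (k - 1), y i * (a k - a i) + y k * a k := by
  rw [add_mul, Finset.sum_mul]
  refine Nat.add_le_add (Finset.sum_le_sum ?_) (Nat.mul_le_mul_left _ (Nat.sub_le _ _))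
  intro i hi
  rw [mem_Icc] at hi
  have h1 : a i ≤ a (k - 1) := selmer_mono k a hmono i (k - 1) hi.1 hi.2 (by omega)
  exact Nat.mul_le_mul_left _ (by omega)

end Aux

theorem stmt7 (k : ℕ) (a : ℕ → ℕ) (hk : 2 ≤ k) (ha1 : a 1 = 1)
    (hmono : ∀ i, 1 ≤ i → i < k → a i < a (i + 1)) (h : ℕ) (hh : selmerH1 k a ≤ h) :
    (postN k a h : ℤ) = (h * a k : ℤ) - FrobCompZ k a := by
  classical
  have hk1 : 1 ≤ k := by omega
  have hak : ∀ i, 1 ≤ i → i ≤ k → a i ≤ a k := fun i h1 h2 => selmer_mono k a hmono i k h1 h2 le_rfl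
  have hA1 : 1 ≤ a k := by have := hak 1 le_rfl hk1; omega
  have hd : a (k - 1) < a k := by
    have hmk := hmono (k - 1) (by omega) (by omega)
    have e : k - 1 + 1 = k := by omega
    rwa [e] at hmk
  set h0 := selmerH0 k a with hh0
  have hh0h : h0 ≤ h := le_trans (Nat.le_add_right _ _) hh
  set S : Set ℤ := {n : ℤ | ¬ ∃ y : ℕ → ℕ,
    ((∑ i ∈ Finset.Icc 1 (k-1), y i * (a k - a i) + y k * a k : ℕ) : ℤ) = n} with hS
  have hFrob : FrobCompZ k a = sSup S := rfl
  have hneg : (-1 : ℤ) ∈ S := by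
    simp only [hS, Set.mem_setOf_eq]
    rintro ⟨y, hy⟩
    have := Int.natCast_nonneg (∑ i ∈ Finset.Icc 1 (k-1), y i * (a k - a i) + y k * a k)
    omega
  -- every z ≥ h0 * a k is representable
  have hrepAll : ∀ z : ℤ, ((h0 * a k : ℕ) : ℤ) ≤ z → z ∉ S := by
    intro z hz
    simp only [hS, Set.mem_setOf_eq, not_not]
    obtain ⟨M, rfl⟩ : ∃ M : ℕ, z = (M : ℤ) :=
      ⟨z.toNat, (Int.toNat_of_nonneg (le_trans (Int.natCast_nonneg _) hz)).symm⟩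
    have hM : h0 * a k ≤ M := by exact_mod_cast hz
    have hdivge : h0 ≤ M / a k := (Nat.le_div_iff_mul_le (by omega)).mpr hM
    set t := M / a k - h0 with htdef
    set r' := M % a k with hr'
    have hrlt : r' < a k := Nat.mod_lt _ (by omega)
    have hMeq : M = (h0 + t) * a k + r' := by
      have h2 : h0 + t = M / a k := by omega
      rw [h2, mul_comm]
      exact (Nat.div_add_mod M (a k)).symm
    obtain ⟨x, hxsum, hxw⟩ := selmer_rep_of_le k a ha1 hmono hk1 (a k - r') 1 (by omega)
    obtain ⟨y, hy⟩ := selmer_rep_to_comp k a hk1 hak x (h0 + 1 + t) (a k - r') hxsum (by omega)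
    refine ⟨y, ?_⟩
    rw [hy, Nat.cast_sub hrlt.le]
    have hMc : (M : ℤ) = ((h0 + t : ℕ) : ℤ) * (a k : ℤ) + (r' : ℤ) := by
      rw [hMeq]; push_cast; ring
    rw [hMc]; push_cast; ring
  have hbdd : BddAbove S :=
    ⟨((h0 * a k : ℕ) : ℤ), fun z hz => le_of_not_gt fun hlt => hrepAll z hlt.le hz⟩
  set G := sSup S with hG
  have hGS : G ∈ S := Int.csSup_mem ⟨-1, hneg⟩ hbdd
  have hGlt : G < ((h0 * a k : ℕ) : ℤ) := lt_of_not_ge fun hle => hrepAll G hle hGS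
  have hGge : -1 ≤ G := le_csSup hbdd hneg
  have hrepGT : ∀ z : ℤ, G < z → ∃ y : ℕ → ℕ,
      ((∑ i ∈ Finset.Icc 1 (k-1), y i * (a k - a i) + y k * a k : ℕ) : ℤ) = z := by
    intro z hz
    by_contra hc
    exact absurd (le_csSup hbdd (by simpa [hS, Set.mem_setOf_eq] using hc)) (not_le.mpr hz)
  have hcastA : ((h * a k : ℕ) : ℤ) = (h : ℤ) * (a k : ℤ) := by push_cast; ring
  have hmul_le : ((h0 * a k : ℕ) : ℤ) ≤ ((h * a k : ℕ) : ℤ) :=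
    Nat.cast_le.mpr (Nat.mul_le_mul_right _ hh0h)
  set Nz : ℤ := (h : ℤ) * (a k : ℤ) - G with hNzdef
  have hNz1 : 1 ≤ Nz := by rw [hNzdef, ← hcastA]; linarith
  set Nn : ℕ := Nz.toNat with hNndef
  have hNzNn : (Nn : ℤ) = Nz := Int.toNat_of_nonneg (by linarith)
  have hNnpos : 0 < Nn := by omega
  -- Claim A : Nn is not h-representable
  have hclaimA : ¬ IsRep k a h Nn := by
    rintro ⟨x, hxs, hxw⟩
    obtain ⟨y, hy⟩ := selmer_rep_to_comp k a hk1 hak x h Nn hxs hxw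
    refine hGS ⟨y, ?_⟩
    rw [hy, hNzNn, hNzdef]
    ring
  -- Claim B : every 0 < n < Nn is h-representable
  have hclaimB : ∀ n : ℕ, 0 < n → n < Nn → IsRep k a h n := by
    intro n hn hnN
    have hnz : (n : ℤ) < Nz := by rw [← hNzNn]; exact_mod_cast hnN
    by_cases hcase : n ≤ (h - h0) * a k
    · obtain ⟨x, hxs, hxw⟩ := selmer_rep_of_le k a ha1 hmono hk1 n (h - h0) hcase
      exact ⟨x, hxs, by omega⟩
    · push_neg at hcase
      have hnle : n ≤ h * a k := by
        have h1 : (n : ℤ) ≤ ((h * a k : ℕ) : ℤ) := by rw [hcastA]; linarith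
        exact_mod_cast h1
      set m := h * a k - n with hm
      have hmc : (m : ℤ) = (h : ℤ) * (a k : ℤ) - (n : ℤ) := by
        rw [hm, Nat.cast_sub hnle, hcastA]
      have hmG : G < (m : ℤ) := by rw [hmc]; linarith
      obtain ⟨y, hy⟩ := hrepGT (m : ℤ) hmG
      have hyN : (∑ i ∈ Finset.Icc 1 (k-1), y i * (a k - a i) + y k * a k) = m := by
        exact_mod_cast hy
      set W := (∑ i ∈ Finset.Icc 1 (k-1), y i) + y k with hW
      have hWd : W * (a k - a (k - 1)) ≤ m := hyN ▸ selmer_comp_weight k a hk hmono y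
      have hmlt : m < h0 * a k := by
        have e : (h - h0) * a k = h * a k - h0 * a k := Nat.sub_mul h h0 (a k)
        have e2 : h0 * a k ≤ h * a k := Nat.mul_le_mul_right _ hh0h
        omega
      have hWh : W ≤ h := by
        set d := a k - a (k - 1) with hdd
        have hd0 : 0 < d := by omega
        by_cases hWh0 : W ≤ h0
        · omega
        · have e3 : (W - h0) * d = W * d - h0 * d := Nat.sub_mul W h0 d
          have e2 : h0 * a k = h0 * d + h0 * a (k - 1) := by
            rw [hdd, ← Nat.mul_add]
            congr 1
            omega
          have e4 : h0 * a (k - 1) ≤ (h0 + 1) * a (k - 1) :=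
            Nat.mul_le_mul_right _ (by omega)
          have e5 : h0 * d ≤ W * d := Nat.mul_le_mul_right _ (by omega)
          have h5 : (W - h0) * d ≤ (h0 + 1) * a (k - 1) - 1 := by omega
          have h6 : W - h0 ≤ ((h0 + 1) * a (k - 1) - 1) / d :=
            (Nat.le_div_iff_mul_le hd0).mpr h5
          have h7 : ((h0 + 1) * a (k - 1) - 1) / d ≤ ((h0 + 1) * a (k - 1) + d - 1) / d :=
            Nat.div_le_div_right (by omega)
          have h8 : selmerH1 k a = h0 + ((h0 + 1) * a (k - 1) + d - 1) / d := rfl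
          omega
      -- construct the representation of n
      obtain ⟨p, hp⟩ : ∃ p, k = p + 1 := ⟨k - 1, by omega⟩
      subst hp
      simp only [Nat.add_sub_cancel] at hy hyN hW hWd
      refine ⟨fun i => if i = p + 1 then h - W else y i, ?_, ?_⟩
      · have hgz : ((∑ i ∈ Finset.Icc 1 (p + 1),
            (if i = p + 1 then h - W else y i) * a i : ℕ) : ℤ) = (n : ℤ) := by
          push_cast
          rw [Finset.sum_Icc_succ_top (by omega : 1 ≤ p + 1)]
          simp only [if_true, ite_true]
          have hne : ∀ i ∈ Finset.Icc 1 p,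
              (if i = p + 1 then ((h - W : ℕ) : ℤ) else ((y i : ℕ) : ℤ)) * (a i : ℤ)
                = (y i : ℤ) * (a i : ℤ) := by
            intro i hi
            rw [Finset.mem_Icc] at hi
            rw [if_neg (by omega)]
          rw [Finset.sum_congr rfl hne]
          have hcc := selmer_comp_cast (p + 1) a hak y
          simp only [Nat.add_sub_cancel] at hcc
          rw [hcc, hmc] at hy
          have hWz : (W : ℤ) = (∑ i ∈ Finset.Icc 1 p, (y i : ℤ)) + (y (p + 1) : ℤ) := by
            rw [hW]; push_cast; ring
          have hhW : ((h - W : ℕ) : ℤ) = (h : ℤ) - (W : ℤ) := Nat.cast_sub hWh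
          rw [hhW]
          linear_combination (-1 : ℤ) * hy - (a (p + 1) : ℤ) * hWz
        exact_mod_cast hgz
      · rw [Finset.sum_Icc_succ_top (by omega : 1 ≤ p + 1)]
        simp only [if_true, ite_true]
        have hne : ∀ i ∈ Finset.Icc 1 p,
            (if i = p + 1 then h - W else y i) = y i := by
          intro i hi
          rw [Finset.mem_Icc] at hi
          rw [if_neg (by omega)]
        rw [Finset.sum_congr rfl hne,
          show (Finset.Icc 1 p).sum y = ∑ i ∈ Finset.Icc 1 p, y i from rfl]
        omega
  -- conclude
  have hfin : postN k a h = Nn := by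
    have hmem : Nn ∈ {n : ℕ | 0 < n ∧ ¬ IsRep k a h n} := ⟨hNnpos, hclaimA⟩
    have hinf := Nat.sInf_mem (⟨Nn, hmem⟩ : Set.Nonempty {n : ℕ | 0 < n ∧ ¬ IsRep k a h n})
    have hle := Nat.sInf_le hmem
    rcases lt_or_eq_of_le hle with hlt | heq
    · exact absurd (hclaimB _ hinf.1 hlt) hinf.2
    · exact heq
  rw [hfin, hFrob, hNzNn]
end
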